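/- Let T be a commutative ring, λ: T → C a ring homomorphism with kernel I, M a T-module, e ∈ M, L a nonzero complex number, and μ: M → C an additive map satisfying μ(t·e) = λ(t)·L for all t ∈ T. Then the T-module map T → T·e/(I·e), t ↦ t·e + I·e, is surjective with kernel exactly I, inducing an isomorphism T/I ≅ T·e/(I·e). -/
import Mathlib


/-- Let `T` be a commutative ring, `λ : T → ℂ` a ring homomorphism
with kernel `I`, `M` a `T`-module, `e ∈ M`, `L ≠ 0`, and `μ : M → ℂ` additive
with `μ(t•e) = λ(t)·L` for all `t`.  Then the map `T → T·e/(I·e)`, `t ↦ t•e + I·e`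
has kernel exactly `I` and range exactly `T·e/(I·e)`, so it induces an isomorphism
`T/I ≅ T·e/(I·e)`. -/
theorem stmt5 {T : Type*} [CommRing T] (lam : T →+* ℂ)
    {M : Type*} [AddCommGroup M] [Module T M] (e : M)
    (L : ℂ) (hL : L ≠ 0) (μ : M →+ ℂ) (hμ : ∀ t : T, μ (t • e) = lam t * L) :
    LinearMap.ker (((RingHom.ker lam • Submodule.span T {e}).mkQ).comp
        (LinearMap.toSpanSingleton T M e)) = RingHom.ker lam ∧
      LinearMap.range (((RingHom.ker lam • Submodule.span T {e}).mkQ).comp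
        (LinearMap.toSpanSingleton T M e))
        = Submodule.map ((RingHom.ker lam • Submodule.span T {e}).mkQ)
            (Submodule.span T {e}) := by
  have hvanish : ∀ m ∈ (RingHom.ker lam • Submodule.span T {e} : Submodule T M),
      μ m = 0 := by
    intro m hm
    refine Submodule.smul_induction_on hm ?_ ?_
    · intro i hi n hn
      obtain ⟨s, rfl⟩ := Submodule.mem_span_singleton.mp hn
      rw [smul_smul, hμ, map_mul, RingHom.mem_ker.mp hi, zero_mul, zero_mul]
    · intro x y hx hy
      rw [map_add, hx, hy, add_zero]
  constructor
  · ext t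
    simp only [LinearMap.mem_ker, LinearMap.comp_apply,
      LinearMap.toSpanSingleton_apply, Submodule.mkQ_apply,
      Submodule.Quotient.mk_eq_zero, RingHom.mem_ker]
    constructor
    · intro h
      have := hvanish _ h
      rw [hμ] at this
      exact (mul_eq_zero.mp this).resolve_right hL
    · intro h
      exact Submodule.smul_mem_smul (RingHom.mem_ker.mpr h)
        (Submodule.mem_span_singleton_self e)
  · rw [LinearMap.range_comp, ← LinearMap.span_singleton_eq_range]
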